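/- arXiv:1812.01564 — 3 statements merged into one kernel-verified Lean document; each statement's English description precedes it below -/
import Mathlib

section
/- Let G be a directed graph embedded on an orientable surface, let λ be a directed cocycle in G (a simple closed dual walk all of whose dual edges are directed consistently), and let ω be a closed walk in G that admits an Alexander numbering (i.e., ω is bounding). Then ω traverses no edge of λ. -/
/-- A finite directed graph embedded on an orientable surface, recorded combinatorially:
each directed edge has a tail and head vertex, and a left and right shore (face). -/
structure EmbGraph where
  V : Type
  E : Type
  F : Type
  [instV : Fintype V]
  [instE : Fintype E]
  [instF : Fintype F]
  [deqE : DecidableEq E]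
  tail : E → V
  head : E → V
  Left : E → F
  Right : E → F

attribute [instance] EmbGraph.instV EmbGraph.instE EmbGraph.instF EmbGraph.deqE

/-- A closed directed walk, given as its nonempty list of edges in order. -/
def EmbGraph.IsClosedWalk (G : EmbGraph) (w : List G.E) : Prop :=
  w ≠ [] ∧ w.Chain' (fun e e' => G.head e = G.tail e') ∧
    ∀ h : w ≠ [], G.head (w.getLast h) = G.tail (w.head h)

/-- A closed walk is bounding (trivial in integer homology) if its traversal-count
function is the boundary of an Alexander numbering of the faces. -/
def EmbGraph.IsBounding (G : EmbGraph) (w : List G.E) : Prop :=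
  ∃ α : G.F → ℤ, ∀ e : G.E, (w.count e : ℤ) = α (G.Left e) - α (G.Right e)

/-- A directed cocycle: a simple closed dual walk through `ℓ ≥ 1` distinct faces
`fc 0, fc 1, …` with dual edges `ed i` directed from `fc i` to `fc (i+1)`. -/
def EmbGraph.IsCocycle (G : EmbGraph) (ℓ : ℕ) (fc : ZMod ℓ → G.F) (ed : ZMod ℓ → G.E) : Prop :=
  1 ≤ ℓ ∧ Function.Injective fc ∧
    ∀ i : ZMod ℓ, G.Left (ed i) = fc i ∧ G.Right (ed i) = fc (i + 1)

/-- If `λ` is a directed cocycle and `ω` is a closed walk admitting an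
Alexander numbering (vanishing on boundary faces), then `ω` traverses no edge of the
cocycle. -/
theorem no_bounding_walk_through_cocycle
    (G : EmbGraph) (Bdry : G.F → Prop)
    (w : List G.E) (hw : G.IsClosedWalk w)
    (α : G.F → ℤ) (hα0 : ∀ f : G.F, Bdry f → α f = 0)
    (hα : ∀ e : G.E, (w.count e : ℤ) = α (G.Left e) - α (G.Right e))
    (ℓ : ℕ) (fc : ZMod ℓ → G.F) (ed : ZMod ℓ → G.E)
    (hco : G.IsCocycle ℓ fc ed) :
    ∀ i : ZMod ℓ, w.count (ed i) = 0 := by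
  obtain ⟨hℓ, hinj, hshore⟩ := hco
  haveI : NeZero ℓ := ⟨Nat.one_le_iff_ne_zero.mp hℓ⟩
  have hsum : ∑ j : ZMod ℓ, ((w.count (ed j) : ℤ)) = 0 := by
    have : ∀ j : ZMod ℓ, (w.count (ed j) : ℤ) = α (fc j) - α (fc (j + 1)) := by
      intro j
      rw [hα, (hshore j).1, (hshore j).2]
    rw [Finset.sum_congr rfl fun j _ => this j, Finset.sum_sub_distrib]
    rw [Fintype.sum_equiv (Equiv.addRight (1 : ZMod ℓ)) (fun x => α (fc (x + 1))) (fun j => α (fc j)) (fun j => rfl)]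
    ring
  have hnn : ∀ j ∈ Finset.univ, (0 : ℤ) ≤ (w.count (ed j) : ℤ) := fun j _ => Int.ofNat_nonneg _
  intro i
  have := (Finset.sum_eq_zero_iff_of_nonneg hnn).mp hsum i (Finset.mem_univ i)
  exact_mod_cast this
end

section
/- With the sequences n_1, n_2 defined by n_1(1) = 4g, n_2(1) = 0, n_1(r) = (4g−3)n_1(r−1) + (4g−4)n_2(r−1), and n_2(r) = n_1(r−1) + n_2(r−1) for g ≥ 2, one has n_1(r) ≥ λ^r and n_2(r+1) ≥ λ^r for all r ≥ 1, where λ = 2g − 1 + 2√(g(g−1)). Consequently N(r) := 1 + Σ_{s=1}^{r} (n_1(s)+n_2(s)) satisfies N(r) ≥ λ^r for all r ≥ 0. -/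
set_option maxHeartbeats 800000


/-- With `n₁ 1 = 4g`, `n₂ 1 = 0`, and the recurrence
`n₁ r = (4g−3) n₁ (r−1) + (4g−4) n₂ (r−1)`, `n₂ r = n₁ (r−1) + n₂ (r−1)` for `g ≥ 2`,
one has `n₁ r ≥ λ^r` and `n₂ (r+1) ≥ λ^r` for all `r ≥ 1`, with
`λ = 2g−1+2√(g(g−1))`; consequently `N r = 1 + ∑_{s=1}^{r} (n₁ s + n₂ s)` satisfies
`N r ≥ λ^r` for all `r ≥ 0`. -/
theorem growth_lower_bound (g : ℕ) (hg : 2 ≤ g) (n1 n2 : ℕ → ℝ)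
    (h1 : n1 1 = 4 * g) (h2 : n2 1 = 0)
    (hrec : ∀ r : ℕ, 2 ≤ r →
      n1 r = (4 * g - 3) * n1 (r - 1) + (4 * g - 4) * n2 (r - 1) ∧
      n2 r = n1 (r - 1) + n2 (r - 1)) :
    (∀ r : ℕ, 1 ≤ r →
      (2 * (g : ℝ) - 1 + 2 * Real.sqrt ((g : ℝ) * (g - 1))) ^ r ≤ n1 r ∧
      (2 * (g : ℝ) - 1 + 2 * Real.sqrt ((g : ℝ) * (g - 1))) ^ r ≤ n2 (r + 1)) ∧
    (∀ r : ℕ,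
      (2 * (g : ℝ) - 1 + 2 * Real.sqrt ((g : ℝ) * (g - 1))) ^ r ≤
        1 + ∑ s ∈ Finset.Icc 1 r, (n1 s + n2 s)) := by
  set G : ℝ := (g : ℝ) with hGdef
  have hG : (2 : ℝ) ≤ G := by rw [hGdef]; exact_mod_cast hg
  set sq : ℝ := Real.sqrt (G * (G - 1)) with hsdef
  set L : ℝ := 2 * G - 1 + 2 * sq with hLdef
  have hprod : (0 : ℝ) ≤ G * (G - 1) := by nlinarith
  have hs2 : sq ^ 2 = G * (G - 1) := Real.sq_sqrt hprod
  have hs0 : 0 ≤ sq := Real.sqrt_nonneg _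
  have hs1 : 1 ≤ sq := by nlinarith
  have hsle : sq ≤ G - 1 / 2 := by
    rw [hsdef, show G - 1/2 = Real.sqrt ((G - 1/2)^2) by
      rw [Real.sqrt_sq (by linarith)]]
    exact Real.sqrt_le_sqrt (by nlinarith)
  have hL1 : 1 ≤ L := by rw [hLdef]; nlinarith
  have hL0 : 0 ≤ L := by linarith
  have hLle : L ≤ 4 * G - 2 := by rw [hLdef]; linarith
  have hL4g : L ≤ 4 * G := by linarith
  have hLsq : L ^ 2 = (4 * G - 2) * L - 1 := by
    rw [hLdef]; linear_combination 4 * hs2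
  -- recurrences in convenient form
  have hr1 : ∀ r : ℕ, n1 (r + 2) = (4 * G - 3) * n1 (r + 1) + (4 * G - 4) * n2 (r + 1) := by
    intro r
    have := (hrec (r + 2) (by omega)).1
    simpa [hGdef] using this
  have hr2 : ∀ r : ℕ, n2 (r + 2) = n1 (r + 1) + n2 (r + 1) := by
    intro r
    have := (hrec (r + 2) (by omega)).2
    simpa using this
  have hn22 : n2 2 = 4 * G := by
    have := hr2 0
    rw [this, h1, h2, hGdef]; ring
  -- chain: n2 (r+1) ≥ L * n2 r and n2 r ≥ 0, for r ≥ 1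
  have C : ∀ r : ℕ, 1 ≤ r → L * n2 r ≤ n2 (r + 1) ∧ 0 ≤ n2 r := by
    intro r hr
    induction r, hr using Nat.le_induction with
    | base => constructor <;> rw [h2] <;> simp [hn22] <;> linarith
    | succ r hr ih =>
      obtain ⟨ih1, ih2⟩ := ih
      have h0 : 0 ≤ n2 (r + 1) := le_trans (by positivity) ih1
      refine ⟨?_, h0⟩
      -- n2 (r+2) = (4G-2) n2 (r+1) - n2 r
      obtain ⟨k, rfl⟩ : ∃ k, r = k + 1 := ⟨r - 1, by omega⟩
      have e : n2 (k + 3) = (4 * G - 2) * n2 (k + 2) - n2 (k + 1) := by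
        have e1 := hr1 k
        have e2 := hr2 k
        have e3 := hr2 (k + 1)
        have : n1 (k + 2) + n2 (k + 2) = (4 * G - 2) * n2 (k + 2) - n2 (k + 1) := by
          rw [e1, e2]; ring
        rw [show k + 1 + 1 + 1 = k + 3 by ring] at e3
        rw [e3]; exact this
      rw [show k + 1 + 1 + 1 = k + 3 by ring, e]
      -- goal: L * n2 (k+2) ≤ (4G-2) * n2 (k+2) - n2 (k+1)
      -- multiply by L: n2(k+2) - L * n2(k+1) ≥ 0
      nlinarith [mul_nonneg hL0 (sub_nonneg.mpr ih1), mul_pos (lt_of_lt_of_le one_pos hL1) (lt_of_lt_of_le one_pos hL1)]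
  -- growth: n2 (r+2) ≥ 4G * L^r
  have D : ∀ r : ℕ, 4 * G * L ^ r ≤ n2 (r + 2) := by
    intro r
    induction r with
    | zero => simp [hn22]
    | succ r ih =>
      have hc := (C (r + 2) (by omega)).1
      calc 4 * G * L ^ (r + 1) = L * (4 * G * L ^ r) := by ring
        _ ≤ L * n2 (r + 2) := by
            apply mul_le_mul_of_nonneg_left ih hL0
        _ ≤ n2 (r + 2 + 1) := hc
  have B : ∀ r : ℕ, 1 ≤ r → L ^ r ≤ n2 (r + 1) := by
    intro r hr
    obtain ⟨k, rfl⟩ : ∃ k, r = k + 1 := ⟨r - 1, by omega⟩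
    have := D k
    have hpk : (0:ℝ) ≤ L ^ k := pow_nonneg hL0 k
    calc L ^ (k + 1) = L * L ^ k := by ring
      _ ≤ 4 * G * L ^ k := by nlinarith
      _ ≤ n2 (k + 1 + 1) := this
  have A : ∀ r : ℕ, 1 ≤ r → L ^ r ≤ n1 r := by
    intro r hr
    match r, hr with
    | 1, _ => simpa [h1, hGdef] using hL4g
    | (k + 2), _ =>
      have e : n1 (k + 2) = n2 (k + 3) - n2 (k + 2) := by
        have := hr2 (k + 1)
        rw [show k + 1 + 1 + 1 = k + 3 by ring, show k + 1 + 1 = k + 2 by ring] at this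
        linarith
      have hc := (C (k + 2) (by omega)).1
      have hd := D k
      have hpk : (0:ℝ) ≤ L ^ k := pow_nonneg hL0 k
      rw [e]
      have h1' : (L - 1) * n2 (k + 2) ≤ n2 (k + 3) - n2 (k + 2) := by
        have := hc
        rw [show k + 2 + 1 = k + 3 by ring] at this
        nlinarith
      have h2' : L ^ (k + 2) ≤ (L - 1) * n2 (k + 2) := by
        have key : L ^ 2 ≤ (L - 1) * (4 * G) := by nlinarith
        calc L ^ (k + 2) = L ^ 2 * L ^ k := by ring
          _ ≤ (L - 1) * (4 * G) * L ^ k := mul_le_mul_of_nonneg_right key hpk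
          _ = (L - 1) * (4 * G * L ^ k) := by ring
          _ ≤ (L - 1) * n2 (k + 2) := by
              apply mul_le_mul_of_nonneg_left hd (by linarith)
      linarith
  refine ⟨fun r hr => ⟨A r hr, B r hr⟩, ?_⟩
  intro r
  match r with
  | 0 => simp
  | (k + 1) =>
    have hterm : ∀ i ∈ Finset.Icc 1 (k + 1), (0:ℝ) ≤ n1 i + n2 i := by
      intro i hi
      simp only [Finset.mem_Icc] at hi
      have hA := A i hi.1
      have hC := (C i hi.1).2
      have : (0:ℝ) ≤ L ^ i := pow_nonneg hL0 i
      linarith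
    have hsingle : n1 (k + 1) + n2 (k + 1) ≤ ∑ s ∈ Finset.Icc 1 (k + 1), (n1 s + n2 s) :=
      Finset.single_le_sum hterm (by simp)
    have hA := A (k + 1) (by omega)
    have hC := (C (k + 1) (by omega)).2
    linarith
end

section
/- In the context-free grammar with start symbol I and productions I → II | A_iĀ_i | Ā_iA_i, A_i → a_i | A_iI | IA_i, Ā_i → ā_i | Ā_iI | IĀ_i (for 1 ≤ i ≤ β), every word generated by the start symbol I freely reduces to the empty word in the free group on a_1,...,a_β. -/
/-- The context-free grammar (in Chomsky normal form) for trivial words of the free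
group on `β` generators.  A letter is a pair `(i, b) : Fin β × Bool`, where `(i, true)`
is the generator `aᵢ` and `(i, false)` its formal inverse `āᵢ`.  Nonterminals are
`none = I` (the start symbol) and `some (i, b) = Aᵢ` or `Āᵢ`.  The productions are
`I → II | AᵢĀᵢ | ĀᵢAᵢ`, `Aᵢ → aᵢ | AᵢI | IAᵢ`, `Āᵢ → āᵢ | ĀᵢI | IĀᵢ`. -/
inductive Gen (β : ℕ) : Option (Fin β × Bool) → List (Fin β × Bool) → Prop
  | term (i : Fin β) (b : Bool) : Gen β (some (i, b)) [(i, b)]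
  | conc {u v : List (Fin β × Bool)} :
      Gen β none u → Gen β none v → Gen β none (u ++ v)
  | cancel (i : Fin β) (b : Bool) {u v : List (Fin β × Bool)} :
      Gen β (some (i, b)) u → Gen β (some (i, !b)) v → Gen β none (u ++ v)
  | absorbR (i : Fin β) (b : Bool) {u v : List (Fin β × Bool)} :
      Gen β (some (i, b)) u → Gen β none v → Gen β (some (i, b)) (u ++ v)
  | absorbL (i : Fin β) (b : Bool) {u v : List (Fin β × Bool)} :
      Gen β none u → Gen β (some (i, b)) v → Gen β (some (i, b)) (u ++ v)


private lemma gen_aux {β : ℕ} {X : Option (Fin β × Bool)} {w : List (Fin β × Bool)}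
    (h : Gen β X w) :
    FreeGroup.mk w = match X with
      | none => 1
      | some p => FreeGroup.mk [p] := by
  induction h with
  | term i b => rfl
  | conc hu hv ihu ihv => simp only [← FreeGroup.mul_mk, ihu, ihv, one_mul]
  | cancel i b hu hv ihu ihv =>
    have : FreeGroup.mk [(i, !b)] = (FreeGroup.mk [(i, b)])⁻¹ := by
      rw [FreeGroup.inv_mk]; rfl
    simp only [← FreeGroup.mul_mk, ihu, ihv, this, mul_inv_cancel]
  | absorbR i b hu hv ihu ihv =>
    simp only [← FreeGroup.mul_mk, ihu, ihv, mul_one]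
  | absorbL i b hu hv ihu ihv =>
    simp only [← FreeGroup.mul_mk, ihu, ihv, one_mul]

/-- soundness: every word generated by the start symbol `I` freely
reduces to the empty word, i.e., represents the identity of the free group on `β`
generators. -/
theorem trivial_word_grammar_sound (β : ℕ) (w : List (Fin β × Bool))
    (h : Gen β none w) : FreeGroup.mk w = 1 := by
  exact gen_aux h
end
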